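/- Under the change of variables t = x+y, v = (y−x)/(x+y), the sl₂ diagonal Casimir δ(C) = (H²+2H)/4 + FE, realized with H ↦ λ₁+λ₂+2x∂_x+2y∂_y, E ↦ x+y, F ↦ −x∂²_x−y∂²_y−λ₁∂_x−λ₂∂_y, equals (λ₁+λ₂)(λ₁+λ₂−2)/4 + Φ_v^{λ₁,λ₂}, where Φ_v^{λ₁,λ₂} is the Jacobi operator in the variable v, as an operator on ℂ[x,y]. -/

import Mathlib

open Finset MvPolynomial

/-- Action of `H = λ₁+λ₂+2x∂ₓ+2y∂_y` on `ℂ[x,y]` (tensor of two lowest-weight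
Verma modules with weights `a`, `b`). -/
noncomputable def Hop (a b : ℂ) (p : MvPolynomial (Fin 2) ℂ) : MvPolynomial (Fin 2) ℂ :=
  C (a + b) * p + 2 * (X 0 * pderiv 0 p + X 1 * pderiv 1 p)

/-- Action of `E = x + y` on `ℂ[x,y]`. -/
noncomputable def Eop (p : MvPolynomial (Fin 2) ℂ) : MvPolynomial (Fin 2) ℂ :=
  (X 0 + X 1) * p

/-- Action of `F = -x∂ₓ² - y∂_y² - λ₁∂ₓ - λ₂∂_y` on `ℂ[x,y]`. -/
noncomputable def Fop (a b : ℂ) (p : MvPolynomial (Fin 2) ℂ) : MvPolynomial (Fin 2) ℂ :=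
  -(X 0 * pderiv 0 (pderiv 0 p)) - X 1 * pderiv 1 (pderiv 1 p)
    - C a * pderiv 0 p - C b * pderiv 1 p

/-- Action of the diagonal Casimir `δ(C) = (H²+2H)/4 + FE` on `ℂ[x,y]`. -/
noncomputable def CasOp (a b : ℂ) (p : MvPolynomial (Fin 2) ℂ) : MvPolynomial (Fin 2) ℂ :=
  C ((4 : ℂ)⁻¹) * (Hop a b (Hop a b p) + 2 * Hop a b p) + Fop a b (Eop p)

/-- The Jacobi differential operator `Φ^{a,b} = (v²-1)∂² + (a-b+(a+b)v)∂` on `ℂ[v]`. -/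
noncomputable def jacobiOp (a b : ℂ) (p : Polynomial ℂ) : Polynomial ℂ :=
  (Polynomial.X ^ 2 - 1) * Polynomial.derivative (Polynomial.derivative p) +
    (Polynomial.C (a - b) + Polynomial.C (a + b) * Polynomial.X) * Polynomial.derivative p

/-- Homogenisation: `(x+y)^n q((y-x)/(x+y))` as an element of `ℂ[x,y]` (for `deg q ≤ n`). -/
noncomputable def homog2 (q : Polynomial ℂ) (n : ℕ) : MvPolynomial (Fin 2) ℂ :=
  ∑ i ∈ Finset.range (n + 1),
    C (q.coeff i) * (X 1 - X 0) ^ i * (X 0 + X 1) ^ (n - i)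

lemma pd0u : pderiv 0 ((X 1 - X 0 : MvPolynomial (Fin 2) ℂ)) = -1 := by simp
lemma pd1u : pderiv 1 ((X 1 - X 0 : MvPolynomial (Fin 2) ℂ)) = 1 := by simp
lemma pd0s : pderiv 0 ((X 0 + X 1 : MvPolynomial (Fin 2) ℂ)) = 1 := by simp
lemma pd1s : pderiv 1 ((X 0 + X 1 : MvPolynomial (Fin 2) ℂ)) = 1 := by simp

lemma D0 (i m : ℕ) : pderiv 0 ((X 1 - X 0) ^ i * (X 0 + X 1) ^ m : MvPolynomial (Fin 2) ℂ) =
    C (m:ℂ) * ((X 1 - X 0) ^ i * (X 0 + X 1) ^ (m-1))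
      - C (i:ℂ) * ((X 1 - X 0) ^ (i-1) * (X 0 + X 1) ^ m) := by
  rw [pderiv_mul, pderiv_pow, pderiv_pow, pd0u, pd0s, ← C_eq_coe_nat, ← C_eq_coe_nat]; ring

lemma D1 (i m : ℕ) : pderiv 1 ((X 1 - X 0) ^ i * (X 0 + X 1) ^ m : MvPolynomial (Fin 2) ℂ) =
    C (m:ℂ) * ((X 1 - X 0) ^ i * (X 0 + X 1) ^ (m-1))
      + C (i:ℂ) * ((X 1 - X 0) ^ (i-1) * (X 0 + X 1) ^ m) := by
  rw [pderiv_mul, pderiv_pow, pderiv_pow, pd1u, pd1s, ← C_eq_coe_nat, ← C_eq_coe_nat]; ring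

lemma hop_mon (a b : ℂ) (i m : ℕ) :
    Hop a b ((X 1 - X 0) ^ i * (X 0 + X 1) ^ m) =
      C (a + b + 2*(i:ℂ) + 2*(m:ℂ)) * ((X 1 - X 0) ^ i * (X 0 + X 1) ^ m) := by
  obtain (_|k) := i <;> obtain (_|j) := m <;>
  · simp only [Hop, D0, D1, Nat.add_sub_cancel, Nat.zero_sub, Nat.sub_zero]
    push_cast
    simp only [C_add, C_mul, C_sub, C_0, C_1, map_ofNat]
    ring

lemma fop_mon (a b : ℂ) (i m : ℕ) :
    Fop a b ((X 1 - X 0) ^ i * (X 0 + X 1) ^ (m+1)) =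
      -( C ((i:ℂ)*((i:ℂ)-1)) * ((X 1 - X 0) ^ (i-2) * (X 0 + X 1) ^ (m+2))
        + C ((m:ℂ)*((m:ℂ)+1) + 2*(i:ℂ)*((m:ℂ)+1) + (a+b)*((m:ℂ)+1)) *
            ((X 1 - X 0) ^ i * (X 0 + X 1) ^ m)
        + C ((b-a)*(i:ℂ)) * ((X 1 - X 0) ^ (i-1) * (X 0 + X 1) ^ (m+1)) ) := by
  obtain (_|_|k) := i <;> obtain (_|j) := m <;>
  · simp only [Fop, D0, D1, map_sub, map_add, pderiv_C_mul,
      Nat.add_sub_cancel, Nat.zero_sub, Nat.sub_zero, Nat.sub_self,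
      show ∀ k:ℕ, k+1+1-2 = k from fun _ => rfl, show (1:ℕ)-2 = 0 from rfl,
      show (0:ℕ)-2 = 0 from rfl]
    push_cast
    simp only [C_add, C_mul, C_sub, C_0, C_1, map_ofNat]
    ring

lemma Hop_C_mul (a b c : ℂ) (p : MvPolynomial (Fin 2) ℂ) :
    Hop a b (C c * p) = C c * Hop a b p := by
  simp only [Hop, pderiv_C_mul]; ring

lemma Eop_C_mul (c : ℂ) (p : MvPolynomial (Fin 2) ℂ) :
    Eop (C c * p) = C c * Eop p := by
  simp only [Eop]; ring

lemma Fop_C_mul (a b c : ℂ) (p : MvPolynomial (Fin 2) ℂ) :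
    Fop a b (C c * p) = C c * Fop a b p := by
  simp only [Fop, pderiv_C_mul]; ring

lemma CasOp_C_mul (a b c : ℂ) (p : MvPolynomial (Fin 2) ℂ) :
    CasOp a b (C c * p) = C c * CasOp a b p := by
  simp only [CasOp, Hop_C_mul, Eop_C_mul, Fop_C_mul]; ring

lemma cas_mon (a b : ℂ) (i m : ℕ) :
    CasOp a b ((X 1 - X 0) ^ i * (X 0 + X 1) ^ m) =
      C ((a+b)*(a+b-2)/4 + (i:ℂ)*((i:ℂ)-1) + (a+b)*(i:ℂ)) *
          ((X 1 - X 0) ^ i * (X 0 + X 1) ^ m)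
      + C ((a-b)*(i:ℂ)) * ((X 1 - X 0) ^ (i-1) * (X 0 + X 1) ^ (m+1))
      - C ((i:ℂ)*((i:ℂ)-1)) * ((X 1 - X 0) ^ (i-2) * (X 0 + X 1) ^ (m+2)) := by
  have hE : Eop ((X 1 - X 0) ^ i * (X 0 + X 1) ^ m) =
      (X 1 - X 0) ^ i * (X 0 + X 1) ^ (m+1) := by
    simp only [Eop]; ring
  rw [CasOp, hE, fop_mon, hop_mon, Hop_C_mul, hop_mon]
  have hc : (a+b)*(a+b-2)/4 + (i:ℂ)*((i:ℂ)-1) + (a+b)*(i:ℂ) =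
      (4:ℂ)⁻¹*((a + b + 2*(i:ℂ) + 2*(m:ℂ))^2 + 2*(a + b + 2*(i:ℂ) + 2*(m:ℂ)))
        - ((m:ℂ)*((m:ℂ)+1) + 2*(i:ℂ)*((m:ℂ)+1) + (a+b)*((m:ℂ)+1)) := by
    ring
  rw [hc]
  simp only [C_add, C_mul, C_sub, C_pow, C_0, C_1, map_ofNat]
  ring

lemma op_sum {α M N : Type*} [AddCommMonoid M] [AddCommMonoid N] (F : M → N) (h0 : F 0 = 0)
    (hadd : ∀ x y, F (x+y) = F x + F y) (t : Finset α) (f : α → M) :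
    F (∑ i ∈ t, f i) = ∑ i ∈ t, F (f i) := by
  classical
  induction t using Finset.induction_on with
  | empty => simpa
  | insert _ _ h ih => rw [Finset.sum_insert h, Finset.sum_insert h, hadd, ih]

lemma Hop_add (a b : ℂ) (p q : MvPolynomial (Fin 2) ℂ) :
    Hop a b (p + q) = Hop a b p + Hop a b q := by
  simp only [Hop, map_add]; ring

lemma CasOp_add (a b : ℂ) (p q : MvPolynomial (Fin 2) ℂ) :
    CasOp a b (p + q) = CasOp a b p + CasOp a b q := by
  simp only [CasOp, Eop, Fop, Hop_add, mul_add, map_add]; ring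

lemma CasOp_zero (a b : ℂ) : CasOp a b 0 = 0 := by
  simp [CasOp, Hop, Eop, Fop]

lemma jacobiOp_add (a b : ℂ) (p q : Polynomial ℂ) :
    jacobiOp a b (p + q) = jacobiOp a b p + jacobiOp a b q := by
  simp only [jacobiOp, map_add]; ring

lemma jacobiOp_zero (a b : ℂ) : jacobiOp a b 0 = 0 := by
  simp [jacobiOp]

lemma homog2_add (p q : Polynomial ℂ) (n : ℕ) :
    homog2 (p + q) n = homog2 p n + homog2 q n := by
  simp only [homog2, Polynomial.coeff_add, C_add, add_mul, Finset.sum_add_distrib]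

lemma homog2_zero (n : ℕ) : homog2 0 n = 0 := by
  simp [homog2]

lemma homog2_sub (p q : Polynomial ℂ) (n : ℕ) :
    homog2 (p - q) n = homog2 p n - homog2 q n := by
  simp only [homog2, Polynomial.coeff_sub, C_sub, sub_mul, Finset.sum_sub_distrib]

lemma homog2_monomial (c : ℂ) (i n : ℕ) (h : i ≤ n) :
    homog2 (Polynomial.monomial i c) n =
      C c * ((X 1 - X 0) ^ i * (X 0 + X 1) ^ (n-i)) := by
  rw [homog2, Finset.sum_eq_single i]
  · simp [Polynomial.coeff_monomial, mul_assoc]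
  · intro j _ hj
    simp [Polynomial.coeff_monomial, (Ne.symm hj)]
  · intro hi
    exact absurd (Finset.mem_range.mpr (by omega)) hi

lemma homog2_CXpow (d : ℂ) (j n : ℕ) (h : j ≤ n) :
    homog2 (Polynomial.C d * Polynomial.X ^ j) n =
      C d * ((X 1 - X 0) ^ j * (X 0 + X 1) ^ (n-j)) := by
  rw [Polynomial.C_mul_X_pow_eq_monomial, homog2_monomial _ _ _ h]

lemma jac_homog (a b c : ℂ) (i n : ℕ) (h : i ≤ n) :
    homog2 (jacobiOp a b (Polynomial.monomial i c)) n =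
      C (c*((i:ℂ)*((i:ℂ)-1) + (a+b)*(i:ℂ))) * ((X 1 - X 0) ^ i * (X 0 + X 1) ^ (n-i))
      + C (c*(a-b)*(i:ℂ)) * ((X 1 - X 0) ^ (i-1) * (X 0 + X 1) ^ (n-i+1))
      - C (c*(i:ℂ)*((i:ℂ)-1)) * ((X 1 - X 0) ^ (i-2) * (X 0 + X 1) ^ (n-i+2)) := by
  obtain (_|_|k) := i
  · have h0 : jacobiOp a b (Polynomial.monomial 0 c) = 0 := by
      simp [jacobiOp]
    rw [h0, homog2_zero]
    push_cast
    simp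
  · have h1 : jacobiOp a b (Polynomial.monomial 1 c) =
        Polynomial.C (c*(a+b)) * Polynomial.X ^ 1 + Polynomial.C (c*(a-b)) * Polynomial.X ^ 0 := by
      rw [← Polynomial.C_mul_X_pow_eq_monomial]
      simp only [jacobiOp, Polynomial.derivative_C_mul, Polynomial.derivative_X_pow]
      push_cast
      simp only [Polynomial.C_mul, Polynomial.C_sub, Polynomial.C_add, Polynomial.C_1,
        Polynomial.C_0, map_ofNat]
      ring
    rw [h1, homog2_add, homog2_CXpow _ _ _ (by omega), homog2_CXpow _ _ _ (by omega)]
    have e1 : n - 1 + 1 = n := by omega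
    rw [e1]
    push_cast
    simp only [C_add, C_mul, C_sub, C_0, C_1, map_ofNat, Nat.sub_zero]
    ring
  · have h2 : jacobiOp a b (Polynomial.monomial (k+1+1) c) =
        Polynomial.C (c*(((k:ℂ)+2)*((k:ℂ)+1)+(a+b)*((k:ℂ)+2))) * Polynomial.X ^ (k+1+1)
        + Polynomial.C (c*(a-b)*((k:ℂ)+2)) * Polynomial.X ^ (k+1)
        - Polynomial.C (c*((k:ℂ)+2)*((k:ℂ)+1)) * Polynomial.X ^ k := by
      rw [← Polynomial.C_mul_X_pow_eq_monomial]
      simp only [jacobiOp, Polynomial.derivative_C_mul, Polynomial.derivative_X_pow,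
        Nat.add_sub_cancel]
      push_cast
      simp only [Polynomial.C_mul, Polynomial.C_sub, Polynomial.C_add, Polynomial.C_1,
        Polynomial.C_0, map_ofNat]
      ring
    rw [h2, homog2_sub, homog2_add, homog2_CXpow _ _ _ (by omega),
      homog2_CXpow _ _ _ (by omega), homog2_CXpow _ _ _ (by omega)]
    have e1 : n - (k+1) = n - (k+1+1) + 1 := by omega
    have e2 : n - k = n - (k+1+1) + 2 := by omega
    rw [e1, e2]
    push_cast
    simp only [C_add, C_mul, C_sub, C_0, C_1, map_ofNat,
      show ∀ k:ℕ, k+1+1-2 = k from fun _ => rfl, Nat.add_sub_cancel]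
    ring

lemma key_mon (a b c : ℂ) (i n : ℕ) (h : i ≤ n) :
    CasOp a b (homog2 (Polynomial.monomial i c) n) =
      C ((a + b) * (a + b - 2) / 4) * homog2 (Polynomial.monomial i c) n +
        homog2 (jacobiOp a b (Polynomial.monomial i c)) n := by
  rw [homog2_monomial _ _ _ h, CasOp_C_mul, cas_mon, jac_homog _ _ _ _ _ h]
  have e1 : n - i + 1 = n - i + 1 := rfl
  simp only [C_add, C_mul, C_sub, C_0, C_1, map_ofNat, map_div₀]
  ring

/-- Under `t = x+y`, `v = (y-x)/(x+y)`, the diagonal Casimir `δ(C) = (H²+2H)/4 + FE`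
acts on `t^n q(v)` as `(λ₁+λ₂)(λ₁+λ₂-2)/4 + Φ_v^{λ₁,λ₂}`. -/
theorem casimir_is_jacobi_operator (a b : ℂ) (n : ℕ) (q : Polynomial ℂ)
    (hq : q.natDegree ≤ n) :
    CasOp a b (homog2 q n) =
      C ((a + b) * (a + b - 2) / 4) * homog2 q n + homog2 (jacobiOp a b q) n := by
  have hd : q = ∑ i ∈ Finset.range (n+1), Polynomial.monomial i (q.coeff i) :=
    Polynomial.as_sum_range' q (n+1) (by omega)
  rw [hd]
  rw [op_sum (fun p => homog2 p n) (homog2_zero n) (fun x y => homog2_add x y n),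
    op_sum (CasOp a b) (CasOp_zero a b) (CasOp_add a b),
    op_sum (jacobiOp a b) (jacobiOp_zero a b) (jacobiOp_add a b),
    op_sum (fun p => homog2 p n) (homog2_zero n) (fun x y => homog2_add x y n),
    Finset.mul_sum, ← Finset.sum_add_distrib]
  refine Finset.sum_congr rfl fun i hi => ?_
  exact key_mon a b _ i n (by simpa using Nat.lt_succ_iff.mp (Finset.mem_range.mp hi))
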